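/- For every morphism term g of the free bicartesian closed category ℬ, t(t′(g)) = g in ℬ, where t′ translates morphism terms of ℬ to proofs of the sequent system 𝒥 and t translates 𝒥-proofs back to morphism terms of ℬ. -/
import Mathlib


namespace JSys

/-! ### The sequent system `𝒥` for intuitionistic propositional logic -/

/-- formulae, generated from a countable set of propositional letters by `⊤`, `⊥`,
`∧`, `∨`, `→` -/
inductive Fml : Type
  | pl : ℕ → Fml
  | top : Fml
  | bot : Fml
  | and : Fml → Fml → Fml
  | or : Fml → Fml → Fml
  | imp : Fml → Fml → Fml
deriving DecidableEq

/-- `∧`-contexts -/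
inductive Ctx : Type
  | box : Ctx
  | conL : Ctx → Fml → Ctx
  | conR : Fml → Ctx → Ctx
  | conB : Ctx → Ctx → Ctx

/-- substitution of a formula for every occurrence of `□` in a `∧`-context -/
def Ctx.fill : Ctx → Fml → Fml
  | .box, A => A
  | .conL G B, A => (G.fill A).and B
  | .conR B G, A => B.and (G.fill A)
  | .conB G H, A => (G.fill A).and (H.fill A)

/-- the number of occurrences of `□` in a `∧`-context; a `∧₁`-context is a
`∧`-context `F` with `F.boxes = 1` -/
def Ctx.boxes : Ctx → ℕ
  | .box => 1
  | .conL G _ => G.boxes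
  | .conR _ G => G.boxes
  | .conB G H => G.boxes + H.boxes

/-- substitution of a `∧`-context for every occurrence of `□` in a `∧`-context -/
def Ctx.subst : Ctx → Ctx → Ctx
  | .box, K => K
  | .conL G A, K => .conL (G.subst K) A
  | .conR A G, K => .conR A (G.subst K)
  | .conB G H, K => .conB (G.subst K) (H.subst K)

theorem Ctx.subst_fill (G K : Ctx) (X : Fml) :
    (G.subst K).fill X = G.fill (K.fill X) := by
  induction G <;> simp [Ctx.subst, Ctx.fill, *]

/-- Proofs of the sequent system `𝒥`.  A proof of the sequent `A ⊢ B` is a term of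
type `JPf A B`.  The axioms are `a_A : A ⊢ A` and `Π_A : ⊥ ⊢ A`; the structural
rules (for `∧₁`-contexts `F`, witnessed by `F.boxes = 1`) are the two associativity
rules, commutativity `γ`, contraction `ω`, thinning `θ`, the unit rules `τ`, `τⁱ`,
and mix (for an arbitrary `∧`-context `G`); the rules for the connectives are `(∧)`,
`(◇)`, the two right `∨`-introductions, `(∗)` and `(▷)`. -/
inductive JPf : Fml → Fml → Type
  | ax (A : Fml) : JPf A A
  | exf (A : Fml) : JPf .bot A
  /-- `(β^→_F)`: from `F((A∧B)∧C) ⊢ D` infer `F(A∧(B∧C)) ⊢ D` -/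
  | bA (F : Ctx) (hF : F.boxes = 1) {A B C D : Fml} :
      JPf (F.fill ((A.and B).and C)) D → JPf (F.fill (A.and (B.and C))) D
  /-- `(β^←_F)`: from `F(A∧(B∧C)) ⊢ D` infer `F((A∧B)∧C) ⊢ D` -/
  | bB (F : Ctx) (hF : F.boxes = 1) {A B C D : Fml} :
      JPf (F.fill (A.and (B.and C))) D → JPf (F.fill ((A.and B).and C)) D
  /-- `(γ_F)` -/
  | perm (F : Ctx) (hF : F.boxes = 1) {A B C : Fml} :
      JPf (F.fill (A.and B)) C → JPf (F.fill (B.and A)) C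
  /-- `(ω_F)` -/
  | contr (F : Ctx) (hF : F.boxes = 1) {A B : Fml} :
      JPf (F.fill (A.and A)) B → JPf (F.fill A) B
  /-- `(θ^A_F)` -/
  | thin (F : Ctx) (hF : F.boxes = 1) (A : Fml) {B : Fml} :
      JPf (F.fill .top) B → JPf (F.fill A) B
  /-- `(τ_F)` -/
  | unitI (F : Ctx) (hF : F.boxes = 1) {A B : Fml} :
      JPf (F.fill A) B → JPf (F.fill (A.and .top)) B
  /-- `(τⁱ_F)` -/
  | unitE (F : Ctx) (hF : F.boxes = 1) {A B : Fml} :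
      JPf (F.fill (A.and .top)) B → JPf (F.fill A) B
  /-- mix -/
  | mix (G : Ctx) {A B C : Fml} : JPf A B → JPf (G.fill B) C → JPf (G.fill A) C
  /-- `(∧)` -/
  | andI {A B C D : Fml} : JPf A C → JPf B D → JPf (A.and B) (C.and D)
  /-- `(◇)` -/
  | orE {A B C D : Fml} : JPf (A.and C) D → JPf (B.and C) D → JPf ((A.or B).and C) D
  /-- `(∨ r₁)` -/
  | orI1 {A B : Fml} (C : Fml) : JPf A B → JPf A (B.or C)
  /-- `(∨ r₂)` -/
  | orI2 {A C : Fml} (B : Fml) : JPf A C → JPf A (B.or C)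
  /-- `(∗)` -/
  | star {A B C : Fml} : JPf (A.and B) C → JPf B (A.imp C)
  /-- `(▷)` -/
  | tri {A B C D E : Fml} : JPf A B → JPf (C.and D) E → JPf ((A.and (B.imp C)).and D) E

/-- a proof is mixless iff it contains no application of the rule mix -/
def MixFree : ∀ {A B : Fml}, JPf A B → Prop
  | _, _, .ax _ => True
  | _, _, .exf _ => True
  | _, _, .bA _ _ π => MixFree π
  | _, _, .bB _ _ π => MixFree π
  | _, _, .perm _ _ π => MixFree π
  | _, _, .contr _ _ π => MixFree π
  | _, _, .thin _ _ _ π => MixFree π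
  | _, _, .unitI _ _ π => MixFree π
  | _, _, .unitE _ _ π => MixFree π
  | _, _, .mix _ _ _ => False
  | _, _, .andI π₁ π₂ => MixFree π₁ ∧ MixFree π₂
  | _, _, .orE π₁ π₂ => MixFree π₁ ∧ MixFree π₂
  | _, _, .orI1 _ π => MixFree π
  | _, _, .orI2 _ π => MixFree π
  | _, _, .star π => MixFree π
  | _, _, .tri π₁ π₂ => MixFree π₁ ∧ MixFree π₂

/-! ### The free bicartesian closed category `ℬ` -/

/-- objects of the free bicartesian closed category, generated from the
propositional letters -/
inductive Obj : Type
  | pl : ℕ → Obj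
  | unit : Obj
  | zero : Obj
  | prod : Obj → Obj → Obj
  | coprod : Obj → Obj → Obj
  | exp : Obj → Obj → Obj
deriving DecidableEq

/-- Morphism terms of the free bicartesian closed category, generated from the
special morphisms by the operations `×`, `+`, `⇒` and `∘` (the latter written in
diagrammatic order as `comp`).  Here `d = d_A : A×I → A`, `dInv = dⁱ_A`,
`assocR = b^→`, `assocL = b^←`, `braid = c`, `diag = w`, `bang = k`, `codiag = m`,
`exf = λ`, `inl = λ¹`, `inr = λ²`, `ev = ε`, `coev = η`. -/
inductive Mor : Obj → Obj → Type
  | id (A : Obj) : Mor A A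
  | comp {A B C : Obj} : Mor A B → Mor B C → Mor A C
  | d (A : Obj) : Mor (A.prod .unit) A
  | dInv (A : Obj) : Mor A (A.prod .unit)
  | assocR (A B C : Obj) : Mor (A.prod (B.prod C)) ((A.prod B).prod C)
  | assocL (A B C : Obj) : Mor ((A.prod B).prod C) (A.prod (B.prod C))
  | braid (A B : Obj) : Mor (A.prod B) (B.prod A)
  | diag (A : Obj) : Mor A (A.prod A)
  | bang (A : Obj) : Mor A .unit
  | codiag (A : Obj) : Mor (A.coprod A) A
  | exf (A : Obj) : Mor .zero A
  | inl (A B : Obj) : Mor A (A.coprod B)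
  | inr (A B : Obj) : Mor B (A.coprod B)
  | ev (A B : Obj) : Mor (A.prod (A.exp B)) B
  | coev (A B : Obj) : Mor B (A.exp (A.prod B))
  | pr {A B C D : Obj} : Mor A B → Mor C D → Mor (A.prod C) (B.prod D)
  | co {A B C D : Obj} : Mor A B → Mor C D → Mor (A.coprod C) (B.coprod D)
  | ex {A B C D : Obj} : Mor A B → Mor C D → Mor (B.exp C) (A.exp D)

namespace Mor

/-- the middle part of the canonical transformation `c^m` -/
def cmMid (B C D : Obj) : Mor (B.prod (C.prod D)) (C.prod (B.prod D)) :=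
  .comp (.assocR B C D) (.comp (.pr (.braid B C) (.id D)) (.assocL C B D))

/-- the canonical transformation
`c^m_{A,B,C,D} = b^→_{A,C,B×D} ∘ (1_A × (b^←_{C,B,D} ∘ (c_{B,C} × 1_D) ∘ b^→_{B,C,D})) ∘ b^←_{A,B,C×D}` -/
def cm (A B C D : Obj) : Mor ((A.prod B).prod (C.prod D)) ((A.prod C).prod (B.prod D)) :=
  .comp (.assocL A B (C.prod D)) (.comp (.pr (.id A) (cmMid B C D)) (.assocR A C (B.prod D)))

end Mor

/-- The bicartesian closed equations between morphism terms: the congruence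
generated by the equations of Section 1 of the paper. -/
inductive BEq : ∀ {A B : Obj}, Mor A B → Mor A B → Prop
  | refl {A B} (f : Mor A B) : BEq f f
  | symm {A B} {f g : Mor A B} : BEq f g → BEq g f
  | trans {A B} {f g h : Mor A B} : BEq f g → BEq g h → BEq f h
  | comp_congr {A B C} {f f' : Mor A B} {g g' : Mor B C} :
      BEq f f' → BEq g g' → BEq (.comp f g) (.comp f' g')
  | pr_congr {A B C D} {f f' : Mor A B} {g g' : Mor C D} :
      BEq f f' → BEq g g' → BEq (.pr f g) (.pr f' g')
  | co_congr {A B C D} {f f' : Mor A B} {g g' : Mor C D} :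
      BEq f f' → BEq g g' → BEq (.co f g) (.co f' g')
  | ex_congr {A B C D} {f f' : Mor A B} {g g' : Mor C D} :
      BEq f f' → BEq g g' → BEq (.ex f g) (.ex f' g')
  -- (cat 1), (cat 2)
  | id_left {A B} (f : Mor A B) : BEq (.comp (.id A) f) f
  | id_right {A B} (f : Mor A B) : BEq (.comp f (.id B)) f
  | assoc {A B C D} (f : Mor A B) (g : Mor B C) (h : Mor C D) :
      BEq (.comp (.comp f g) h) (.comp f (.comp g h))
  -- (× 1), (× 2)
  | prod_id (A B : Obj) : BEq (.pr (.id A) (.id B)) (.id (A.prod B))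
  | prod_comp {A B C A' B' C'} (f₁ : Mor A B) (f₂ : Mor B C) (g₁ : Mor A' B') (g₂ : Mor B' C') :
      BEq (.pr (.comp f₁ f₂) (.comp g₁ g₂)) (.comp (.pr f₁ g₁) (.pr f₂ g₂))
  -- (d)
  | d_nat {A B} (f : Mor A B) :
      BEq (.comp (.d A) f) (.comp (.pr f (.id .unit)) (.d B))
  -- (d dⁱ)
  | d_dInv (A : Obj) : BEq (.comp (.dInv A) (.d A)) (.id A)
  | dInv_d (A : Obj) : BEq (.comp (.d A) (.dInv A)) (.id (A.prod .unit))
  -- (d c)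
  | d_braid : BEq (.comp (.braid .unit .unit) (.d .unit)) (.d .unit)
  -- (b)
  | b_nat {A B C D E F'} (f : Mor A D) (g : Mor B E) (h : Mor C F') :
      BEq (.comp (.assocR A B C) (.pr (.pr f g) h))
          (.comp (.pr f (.pr g h)) (.assocR D E F'))
  -- (b b)
  | bR_bL (A B C : Obj) :
      BEq (.comp (.assocL A B C) (.assocR A B C)) (.id ((A.prod B).prod C))
  | bL_bR (A B C : Obj) :
      BEq (.comp (.assocR A B C) (.assocL A B C)) (.id (A.prod (B.prod C)))
  -- (b 5)
  | b5 (A B C D : Obj) :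
      BEq (.comp (.assocR A B (C.prod D)) (.assocR (A.prod B) C D))
          (.comp (.pr (.id A) (.assocR B C D))
            (.comp (.assocR A (B.prod C) D) (.pr (.assocR A B C) (.id D))))
  -- (c)
  | c_nat {A B C D} (f : Mor A C) (g : Mor B D) :
      BEq (.comp (.braid A B) (.pr g f)) (.comp (.pr f g) (.braid C D))
  -- (c c)
  | c_c (A B : Obj) : BEq (.comp (.braid A B) (.braid B A)) (.id (A.prod B))
  -- (b c d)
  | bcd (A B : Obj) :
      BEq (.comp (.assocR A .unit B) (.pr (.d A) (.id B)))
          (.pr (.id A) (.comp (.braid .unit B) (.d B)))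
  -- (b c 6)
  | bc6 (A B C : Obj) :
      BEq (.comp (.assocR A B C) (.comp (.braid (A.prod B) C) (.assocR C A B)))
          (.comp (.pr (.id A) (.braid B C))
            (.comp (.assocR A C B) (.pr (.braid A C) (.id B))))
  -- (w)
  | w_nat {A B} (f : Mor A B) :
      BEq (.comp (.diag A) (.pr f f)) (.comp f (.diag B))
  -- (d w)
  | d_w : BEq (.comp (.diag .unit) (.d .unit)) (.id .unit)
  -- (b w)
  | b_w (A : Obj) :
      BEq (.comp (.diag A) (.comp (.pr (.id A) (.diag A)) (.assocR A A A)))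
          (.comp (.diag A) (.pr (.diag A) (.id A)))
  -- (c w)
  | c_w (A : Obj) : BEq (.comp (.diag A) (.braid A A)) (.diag A)
  -- (b c w 8)
  | bcw8 (A B : Obj) :
      BEq (.comp (.diag (A.prod B)) (Mor.cm A B A B)) (.pr (.diag A) (.diag B))
  -- (k)
  | k_unique {A} (f : Mor A .unit) : BEq f (.bang A)
  -- (d k w)
  | dkw (A : Obj) :
      BEq (.comp (.diag A) (.comp (.pr (.id A) (.bang A)) (.d A))) (.id A)
  -- (+ 1), (+ 2)
  | coprod_id (A B : Obj) : BEq (.co (.id A) (.id B)) (.id (A.coprod B))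
  | coprod_comp {A B C A' B' C'} (f₁ : Mor A B) (f₂ : Mor B C) (g₁ : Mor A' B') (g₂ : Mor B' C') :
      BEq (.co (.comp f₁ f₂) (.comp g₁ g₂)) (.comp (.co f₁ g₁) (.co f₂ g₂))
  -- (λ¹), (λ²)
  | inl_nat {A₁ A₂ B₁ B₂} (f₁ : Mor A₁ B₁) (f₂ : Mor A₂ B₂) :
      BEq (.comp (.inl A₁ A₂) (.co f₁ f₂)) (.comp f₁ (.inl B₁ B₂))
  | inr_nat {A₁ A₂ B₁ B₂} (f₁ : Mor A₁ B₁) (f₂ : Mor A₂ B₂) :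
      BEq (.comp (.inr A₁ A₂) (.co f₁ f₂)) (.comp f₂ (.inr B₁ B₂))
  -- (λ)
  | exf_unique {A} (f : Mor .zero A) : BEq f (.exf A)
  -- (m)
  | m_nat {A B} (f : Mor A B) :
      BEq (.comp (.codiag A) f) (.comp (.co f f) (.codiag B))
  -- (λ m 1)
  | m_inl (A : Obj) : BEq (.comp (.inl A A) (.codiag A)) (.id A)
  | m_inr (A : Obj) : BEq (.comp (.inr A A) (.codiag A)) (.id A)
  -- (λ m 2)
  | m_inl_inr (A B : Obj) :
      BEq (.comp (.co (.inl A B) (.inr A B)) (.codiag (A.coprod B))) (.id (A.coprod B))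
  -- (⇒ 1), (⇒ 2)
  | exp_id (A B : Obj) : BEq (.ex (.id A) (.id B)) (.id (A.exp B))
  | exp_comp {A B' B C D' D} (g₁ : Mor B' B) (g₂ : Mor A B') (f₁ : Mor D' D) (f₂ : Mor C D') :
      BEq (.ex (.comp g₂ g₁) (.comp f₂ f₁)) (.comp (.ex g₁ f₂) (.ex g₂ f₁))
  -- (ε 1)
  | eps1 {A B C} (f : Mor A B) :
      BEq (.comp (.ev C A) f) (.comp (.pr (.id C) (.ex (.id C) f)) (.ev C B))
  -- (η 1)
  | eta1 {A B C} (f : Mor A B) :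
      BEq (.comp (.coev C A) (.ex (.id C) (.pr (.id C) f))) (.comp f (.coev C B))
  -- (ε 2)
  | eps2 {A B C} (f : Mor A B) :
      BEq (.comp (.pr f (.ex (.id B) (.id C))) (.ev B C))
          (.comp (.pr (.id A) (.ex f (.id C))) (.ev A C))
  -- (η 2)
  | eta2 {A B C} (f : Mor A B) :
      BEq (.comp (.coev B C) (.ex f (.pr (.id B) (.id C))))
          (.comp (.coev A C) (.ex (.id A) (.pr f (.id C))))
  -- (1 ε η)
  | triangle1 (A B : Obj) :
      BEq (.comp (.coev A (A.exp B)) (.ex (.id A) (.ev A B))) (.id (A.exp B))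
  -- (ε 1 η)
  | triangle2 (A B : Obj) :
      BEq (.comp (.pr (.id A) (.coev A B)) (.ev A (A.prod B))) (.id (A.prod B))

/-! ### The translations `t` and `t′` -/

/-- the translation of formulae into objects of `ℬ` -/
def tF : Fml → Obj
  | .pl i => .pl i
  | .top => .unit
  | .bot => .zero
  | .and A B => (tF A).prod (tF B)
  | .or A B => (tF A).coprod (tF B)
  | .imp A B => (tF A).exp (tF B)

/-- the functor (acting on morphism terms) extracted from a `∧`-context -/
def mapCtx : (F : Ctx) → {X Y : Fml} → Mor (tF X) (tF Y) →
    Mor (tF (F.fill X)) (tF (F.fill Y))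
  | .box, _, _, g => g
  | .conL G A, _, _, g => .pr (mapCtx G g) (.id (tF A))
  | .conR A G, _, _, g => .pr (.id (tF A)) (mapCtx G g)
  | .conB G H, _, _, g => .pr (mapCtx G g) (mapCtx H g)

/-- the canonical distributivity morphism
`ξ_{X,Y,Z} = ε ∘ (1_X × (m ∘ ((1_X ⇒ λ¹) ∘ η + (1_X ⇒ λ²) ∘ η))) : X×(Y+Z) → (X×Y)+(X×Z)` -/
def xiM (X Y Z : Obj) : Mor (X.prod (Y.coprod Z)) ((X.prod Y).coprod (X.prod Z)) :=
  .comp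
    (.pr (.id X)
      (.comp
        (.co (.comp (.coev X Y) (.ex (.id X) (.inl (X.prod Y) (X.prod Z))))
             (.comp (.coev X Z) (.ex (.id X) (.inr (X.prod Y) (X.prod Z)))))
        (.codiag (X.exp ((X.prod Y).coprod (X.prod Z))))))
    (.ev X ((X.prod Y).coprod (X.prod Z)))

/-- the translation `t` of `𝒥`-proofs into morphism terms of `ℬ` -/
def tP : ∀ {A B : Fml}, JPf A B → Mor (tF A) (tF B)
  | _, _, .ax A => .id (tF A)
  | _, _, .exf A => .exf (tF A)
  | _, _, .bA F _ (A := A) (B := B) (C := C) π =>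
      .comp (mapCtx F (X := A.and (B.and C)) (Y := (A.and B).and C)
        (.assocR (tF A) (tF B) (tF C))) (tP π)
  | _, _, .bB F _ (A := A) (B := B) (C := C) π =>
      .comp (mapCtx F (X := (A.and B).and C) (Y := A.and (B.and C))
        (.assocL (tF A) (tF B) (tF C))) (tP π)
  | _, _, .perm F _ (A := A) (B := B) π =>
      .comp (mapCtx F (X := B.and A) (Y := A.and B) (.braid (tF B) (tF A))) (tP π)
  | _, _, .contr F _ (A := A) π =>
      .comp (mapCtx F (X := A) (Y := A.and A) (.diag (tF A))) (tP π)
  | _, _, .thin F _ A π => .comp (mapCtx F (X := A) (Y := Fml.top) (.bang (tF A))) (tP π)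
  | _, _, .unitI F _ (A := A) π => .comp (mapCtx F (X := A.and Fml.top) (Y := A) (.d (tF A))) (tP π)
  | _, _, .unitE F _ (A := A) π => .comp (mapCtx F (X := A) (Y := A.and Fml.top) (.dInv (tF A))) (tP π)
  | _, _, .mix G π₁ π₂ => .comp (mapCtx G (tP π₁)) (tP π₂)
  | _, _, .andI π₁ π₂ => .pr (tP π₁) (tP π₂)
  | _, _, .orE (A := A) (B := B) (C := C) (D := D) π₁ π₂ =>
      .comp (.braid ((tF A).coprod (tF B)) (tF C))
        (.comp (xiM (tF C) (tF A) (tF B))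
          (.comp (.co (.braid (tF C) (tF A)) (.braid (tF C) (tF B)))
            (.comp (.co (tP π₁) (tP π₂)) (.codiag (tF D)))))
  | _, _, .orI1 C π => .comp (tP π) (.inl _ (tF C))
  | _, _, .orI2 B π => .comp (tP π) (.inr (tF B) _)
  | _, _, .star π => .comp (.coev _ _) (.ex (.id _) (tP π))
  | _, _, .tri (B := Bf) (C := Cf) π₁ π₂ =>
      .comp (.pr (.comp (.pr (tP π₁) (.id ((tF Bf).exp (tF Cf)))) (.ev (tF Bf) (tF Cf))) (.id _))
        (tP π₂)

/-- the translation of objects of `ℬ` back into formulae (inverse to `tF`) -/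
def uF : Obj → Fml
  | .pl i => .pl i
  | .unit => .top
  | .zero => .bot
  | .prod A B => (uF A).and (uF B)
  | .coprod A B => (uF A).or (uF B)
  | .exp A B => (uF A).imp (uF B)

theorem tF_uF (X : Obj) : tF (uF X) = X := by
  induction X <;> simp [tF, uF, *]

/-- the translation `t′` of morphism terms of `ℬ` into `𝒥`-proofs -/
def uP : ∀ {X Y : Obj}, Mor X Y → JPf (uF X) (uF Y)
  | _, _, .id A => .ax (uF A)
  | _, _, .comp f g => .mix .box (uP f) (uP g)
  | _, _, .d A => .unitI .box rfl (.ax (uF A))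
  | _, _, .dInv A => .unitE .box rfl (.ax ((uF A).and .top))
  | _, _, .assocR A B C => .bA .box rfl (.ax (((uF A).and (uF B)).and (uF C)))
  | _, _, .assocL A B C => .bB .box rfl (.ax ((uF A).and ((uF B).and (uF C))))
  | _, _, .braid A B => .perm .box rfl (.ax ((uF B).and (uF A)))
  | _, _, .diag A => .contr .box rfl (.ax ((uF A).and (uF A)))
  | _, _, .bang A => .thin .box rfl (uF A) (.ax .top)
  | _, _, .codiag A => .unitE .box rfl
      (.orE (.unitI .box rfl (.ax (uF A))) (.unitI .box rfl (.ax (uF A))))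
  | _, _, .exf A => .exf (uF A)
  | _, _, .inl A B => .orI1 (uF B) (.ax (uF A))
  | _, _, .inr A B => .orI2 (uF A) (.ax (uF B))
  | _, _, .ev A B => .unitE .box rfl (.tri (.ax (uF A)) (.unitI .box rfl (.ax (uF B))))
  | _, _, .coev A B => .star (.ax ((uF A).and (uF B)))
  | _, _, .pr f g => .andI (uP f) (uP g)
  | _, _, .co (A := A) (B := Bo) (C := C) (D := D) f g => .unitE .box rfl
      (.orE (.unitI .box rfl (.orI1 (uF D) (uP f)))
            (.unitI .box rfl (.orI2 (uF Bo) (uP g))))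
  | _, _, .ex f g => .star (.unitE .box rfl (.tri (uP f) (.unitI .box rfl (uP g))))


/-! ### Auxiliary infrastructure: the quotient category -/

instance msetoid (A B : Obj) : Setoid (Mor A B) :=
  ⟨BEq, ⟨fun f => .refl f, fun h => h.symm, fun h h' => h.trans h'⟩⟩

/-- hom-sets of the quotient category -/
abbrev Q (A B : Obj) := Quotient (msetoid A B)

namespace Q

def mk {A B : Obj} (f : Mor A B) : Q A B := ⟦f⟧

theorem sound {A B : Obj} {f g : Mor A B} (h : BEq f g) : mk f = mk g :=
  Quotient.sound h

theorem exact {A B : Obj} {f g : Mor A B} (h : mk f = mk g) : BEq f g :=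
  Quotient.exact h

def comp {A B C : Obj} : Q A B → Q B C → Q A C :=
  Quotient.map₂ Mor.comp fun _ _ h _ _ h' => h.comp_congr h'

def pr {A B C D : Obj} : Q A B → Q C D → Q (A.prod C) (B.prod D) :=
  Quotient.map₂ Mor.pr fun _ _ h _ _ h' => h.pr_congr h'

def co {A B C D : Obj} : Q A B → Q C D → Q (A.coprod C) (B.coprod D) :=
  Quotient.map₂ Mor.co fun _ _ h _ _ h' => h.co_congr h'

def ex {A B C D : Obj} : Q A B → Q C D → Q (B.exp C) (A.exp D) :=
  Quotient.map₂ Mor.ex fun _ _ h _ _ h' => h.ex_congr h'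

scoped infixl:80 " ⊚ " => Q.comp

@[simp] theorem mk_comp {A B C : Obj} (f : Mor A B) (g : Mor B C) :
    mk (f.comp g) = mk f ⊚ mk g := rfl
@[simp] theorem mk_pr {A B C D : Obj} (f : Mor A B) (g : Mor C D) :
    mk (f.pr g) = (mk f).pr (mk g) := rfl
@[simp] theorem mk_co {A B C D : Obj} (f : Mor A B) (g : Mor C D) :
    mk (f.co g) = (mk f).co (mk g) := rfl
@[simp] theorem mk_ex {A B C D : Obj} (f : Mor A B) (g : Mor C D) :
    mk (f.ex g) = (mk f).ex (mk g) := rfl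

/-- the identity of the quotient category -/
def qid (A : Obj) : Q A A := mk (.id A)

@[simp] theorem mk_id (A : Obj) : mk (.id A) = qid A := rfl

@[simp] theorem id_comp {A B : Obj} (f : Q A B) : qid A ⊚ f = f := by
  induction f using Quotient.ind
  exact sound (BEq.id_left _)

@[simp] theorem comp_id {A B : Obj} (f : Q A B) : f ⊚ qid B = f := by
  induction f using Quotient.ind
  exact sound (BEq.id_right _)

@[simp] theorem comp_assoc {A B C D : Obj} (f : Q A B) (g : Q B C) (h : Q C D) :
    (f ⊚ g) ⊚ h = f ⊚ (g ⊚ h) := by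
  induction f using Quotient.ind
  induction g using Quotient.ind
  induction h using Quotient.ind
  exact sound (BEq.assoc _ _ _)

@[simp] theorem pr_id (A B : Obj) : (qid A).pr (qid B) = qid (A.prod B) :=
  sound (BEq.prod_id A B)

@[simp] theorem pr_comp_pr {A B C A' B' C' : Obj}
    (f₁ : Q A B) (f₂ : Q B C) (g₁ : Q A' B') (g₂ : Q B' C') :
    (f₁.pr g₁) ⊚ (f₂.pr g₂) = (f₁ ⊚ f₂).pr (g₁ ⊚ g₂) := by
  induction f₁ using Quotient.ind
  induction f₂ using Quotient.ind
  induction g₁ using Quotient.ind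
  induction g₂ using Quotient.ind
  exact (sound (BEq.prod_comp _ _ _ _)).symm

@[simp] theorem co_id (A B : Obj) : (qid A).co (qid B) = qid (A.coprod B) :=
  sound (BEq.coprod_id A B)

@[simp] theorem co_comp_co {A B C A' B' C' : Obj}
    (f₁ : Q A B) (f₂ : Q B C) (g₁ : Q A' B') (g₂ : Q B' C') :
    (f₁.co g₁) ⊚ (f₂.co g₂) = (f₁ ⊚ f₂).co (g₁ ⊚ g₂) := by
  induction f₁ using Quotient.ind
  induction f₂ using Quotient.ind
  induction g₁ using Quotient.ind
  induction g₂ using Quotient.ind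
  exact (sound (BEq.coprod_comp _ _ _ _)).symm

@[simp] theorem ex_id (A B : Obj) : (qid A).ex (qid B) = qid (A.exp B) :=
  sound (BEq.exp_id A B)

@[simp] theorem ex_comp_ex {A B B' C D D' : Obj}
    (g₁ : Q B' B) (f₂ : Q C D') (g₂ : Q A B') (f₁ : Q D' D) :
    (g₁.ex f₂) ⊚ (g₂.ex f₁) = (g₂ ⊚ g₁).ex (f₂ ⊚ f₁) := by
  induction g₁ using Quotient.ind
  induction f₂ using Quotient.ind
  induction g₂ using Quotient.ind
  induction f₁ using Quotient.ind
  exact (sound (BEq.exp_comp _ _ _ _)).symm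

theorem d_nat {A B : Obj} (f : Q A B) :
    mk (.d A) ⊚ f = (f.pr (qid .unit)) ⊚ mk (.d B) := by
  induction f using Quotient.ind
  exact sound (BEq.d_nat _)

@[simp] theorem dInv_d (A : Obj) : mk (.dInv A) ⊚ mk (.d A) = qid A :=
  sound (BEq.d_dInv A)

@[simp] theorem d_dInv (A : Obj) : mk (.d A) ⊚ mk (.dInv A) = qid (A.prod .unit) :=
  sound (BEq.dInv_d A)

theorem c_nat {A B C D : Obj} (f : Q A C) (g : Q B D) :
    mk (.braid A B) ⊚ (g.pr f) = (f.pr g) ⊚ mk (.braid C D) := by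
  induction f using Quotient.ind
  induction g using Quotient.ind
  exact sound (BEq.c_nat _ _)

@[simp] theorem c_c (A B : Obj) :
    mk (.braid A B) ⊚ mk (.braid B A) = qid (A.prod B) :=
  sound (BEq.c_c A B)

theorem m_nat {A B : Obj} (f : Q A B) :
    mk (.codiag A) ⊚ f = (f.co f) ⊚ mk (.codiag B) := by
  induction f using Quotient.ind
  exact sound (BEq.m_nat _)

@[simp] theorem m_inl (A : Obj) : mk (.inl A A) ⊚ mk (.codiag A) = qid A :=
  sound (BEq.m_inl A)

@[simp] theorem m_inr (A : Obj) : mk (.inr A A) ⊚ mk (.codiag A) = qid A :=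
  sound (BEq.m_inr A)

@[simp] theorem m_inl_inr (A B : Obj) :
    ((mk (.inl A B)).co (mk (.inr A B))) ⊚ mk (.codiag (A.coprod B)) = qid (A.coprod B) :=
  sound (BEq.m_inl_inr A B)

theorem inl_nat {A₁ A₂ B₁ B₂ : Obj} (f₁ : Q A₁ B₁) (f₂ : Q A₂ B₂) :
    mk (.inl A₁ A₂) ⊚ (f₁.co f₂) = f₁ ⊚ mk (.inl B₁ B₂) := by
  induction f₁ using Quotient.ind
  induction f₂ using Quotient.ind
  exact sound (BEq.inl_nat _ _)

theorem inr_nat {A₁ A₂ B₁ B₂ : Obj} (f₁ : Q A₁ B₁) (f₂ : Q A₂ B₂) :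
    mk (.inr A₁ A₂) ⊚ (f₁.co f₂) = f₂ ⊚ mk (.inr B₁ B₂) := by
  induction f₁ using Quotient.ind
  induction f₂ using Quotient.ind
  exact sound (BEq.inr_nat _ _)

theorem eps1 {A B C : Obj} (f : Q A B) :
    mk (.ev C A) ⊚ f = ((qid C).pr ((qid C).ex f)) ⊚ mk (.ev C B) := by
  induction f using Quotient.ind
  exact sound (BEq.eps1 _)

theorem eta1 {A B C : Obj} (f : Q A B) :
    mk (.coev C A) ⊚ ((qid C).ex ((qid C).pr f)) = f ⊚ mk (.coev C B) := by
  induction f using Quotient.ind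
  exact sound (BEq.eta1 _)

theorem eps2 {A B C : Obj} (f : Q A B) :
    (f.pr ((qid B).ex (qid C))) ⊚ mk (.ev B C)
      = ((qid A).pr (f.ex (qid C))) ⊚ mk (.ev A C) := by
  induction f using Quotient.ind
  exact sound (BEq.eps2 _)

@[simp] theorem triangle1 (A B : Obj) :
    mk (.coev A (A.exp B)) ⊚ ((qid A).ex (mk (.ev A B))) = qid (A.exp B) :=
  sound (BEq.triangle1 A B)

@[simp] theorem triangle2 (A B : Obj) :
    ((qid A).pr (mk (.coev A B))) ⊚ mk (.ev A (A.prod B)) = qid (A.prod B) :=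
  sound (BEq.triangle2 A B)

/-- naturality of `dⁱ`, derived -/
theorem dInv_nat {A B : Obj} (f : Q A B) :
    f ⊚ mk (.dInv B) = mk (.dInv A) ⊚ (f.pr (qid .unit)) := by
  have h1 : mk (Mor.dInv A) ⊚ (mk (Mor.d A) ⊚ (f ⊚ mk (Mor.dInv B)))
      = f ⊚ mk (Mor.dInv B) := by
    rw [← comp_assoc, ← comp_assoc, dInv_d, id_comp]
  rw [← h1, ← comp_assoc (mk (Mor.d A)) f, d_nat, comp_assoc, d_dInv, comp_id]

/-- extensionality for maps out of a coproduct, derived -/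
theorem copr_ext {A B C : Obj} {f g : Q (A.coprod B) C}
    (h1 : mk (.inl A B) ⊚ f = mk (.inl A B) ⊚ g)
    (h2 : mk (.inr A B) ⊚ f = mk (.inr A B) ⊚ g) : f = g := by
  have key : ∀ k : Q (A.coprod B) C,
      k = ((mk (.inl A B) ⊚ k).co (mk (.inr A B) ⊚ k)) ⊚ mk (.codiag C) := by
    intro k
    calc k = (((mk (Mor.inl A B)).co (mk (Mor.inr A B))) ⊚ mk (Mor.codiag (A.coprod B))) ⊚ k := by
            rw [m_inl_inr, id_comp]
      _ = ((mk (Mor.inl A B)).co (mk (Mor.inr A B))) ⊚ (mk (Mor.codiag (A.coprod B)) ⊚ k) := by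
            rw [comp_assoc]
      _ = ((mk (Mor.inl A B)).co (mk (Mor.inr A B))) ⊚ ((k.co k) ⊚ mk (Mor.codiag C)) := by
            rw [m_nat]
      _ = ((mk (.inl A B) ⊚ k).co (mk (.inr A B) ⊚ k)) ⊚ mk (Mor.codiag C) := by
            rw [← comp_assoc, co_comp_co]
  rw [key f, key g, h1, h2]

end Q

open Q in
/-- heterogeneous version of `BEq` -/
inductive BEqH : ∀ {A B C D : Obj}, Mor A B → Mor C D → Prop
  | mk {A B : Obj} {f g : Mor A B} : BEq f g → BEqH f g

namespace BEqH

theorem ofQ {A B : Obj} {f g : Mor A B} (h : Q.mk f = Q.mk g) : BEqH f g :=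
  ⟨Q.exact h⟩

theorem congrQ {A B C D : Obj} {f g : Mor A B} {h : Mor C D}
    (e : Q.mk f = Q.mk g) (hb : BEqH g h) : BEqH f h := by
  cases hb with | mk hb => exact ⟨(Q.exact e).trans hb⟩

theorem comp {A B C A' B' C' : Obj} {f : Mor A B} {g : Mor B C}
    {f' : Mor A' B'} {g' : Mor B' C'} (h1 : BEqH f f') (h2 : BEqH g g') :
    BEqH (f.comp g) (f'.comp g') := by
  cases h1 with | mk h1 => cases h2 with | mk h2 => exact ⟨h1.comp_congr h2⟩

theorem prH {A B C D A' B' C' D' : Obj} {f : Mor A B} {g : Mor C D}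
    {f' : Mor A' B'} {g' : Mor C' D'} (h1 : BEqH f f') (h2 : BEqH g g') :
    BEqH (f.pr g) (f'.pr g') := by
  cases h1 with | mk h1 => cases h2 with | mk h2 => exact ⟨h1.pr_congr h2⟩

theorem coH {A B C D A' B' C' D' : Obj} {f : Mor A B} {g : Mor C D}
    {f' : Mor A' B'} {g' : Mor C' D'} (h1 : BEqH f f') (h2 : BEqH g g') :
    BEqH (f.co g) (f'.co g') := by
  cases h1 with | mk h1 => cases h2 with | mk h2 => exact ⟨h1.co_congr h2⟩

theorem exH {A B C D A' B' C' D' : Obj} {f : Mor A B} {g : Mor C D}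
    {f' : Mor A' B'} {g' : Mor C' D'} (h1 : BEqH f f') (h2 : BEqH g g') :
    BEqH (f.ex g) (f'.ex g') := by
  cases h1 with | mk h1 => cases h2 with | mk h2 => exact ⟨h1.ex_congr h2⟩

theorem toCast {A B C D : Obj} {f : Mor A B} {g : Mor C D} (hb : BEqH f g)
    (h : Mor A B = Mor C D) : BEq (cast h f) g := by
  cases hb with | mk hb =>
    rw [eq_of_heq (cast_heq h f)]
    exact hb

end BEqH

open Q

open Q in
theorem xi_inl (X Y Z : Obj) :
    (qid X).pr (mk (.inl Y Z)) ⊚ mk (xiM X Y Z) = mk (.inl (X.prod Y) (X.prod Z)) := by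
  simp only [xiM, mk_comp, mk_pr, mk_co, mk_id, mk_ex, comp_assoc]
  rw [← comp_assoc, pr_comp_pr, id_comp, ← comp_assoc (mk (Mor.inl Y Z)), inl_nat,
    comp_assoc, m_inl, comp_id]
  rw [show (qid X).pr (mk (Mor.coev X Y) ⊚ (qid X).ex (mk (Mor.inl (X.prod Y) (X.prod Z))))
      = (qid X).pr (mk (Mor.coev X Y)) ⊚ (qid X).pr ((qid X).ex (mk (Mor.inl (X.prod Y) (X.prod Z))))
    from by rw [pr_comp_pr, id_comp]]
  rw [comp_assoc, ← eps1, ← comp_assoc, triangle2, id_comp]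

open Q in
theorem xi_inr (X Y Z : Obj) :
    (qid X).pr (mk (.inr Y Z)) ⊚ mk (xiM X Y Z) = mk (.inr (X.prod Y) (X.prod Z)) := by
  simp only [xiM, mk_comp, mk_pr, mk_co, mk_id, mk_ex, comp_assoc]
  rw [← comp_assoc, pr_comp_pr, id_comp, ← comp_assoc (mk (Mor.inr Y Z)), inr_nat,
    comp_assoc, m_inr, comp_id]
  rw [show (qid X).pr (mk (Mor.coev X Z) ⊚ (qid X).ex (mk (Mor.inr (X.prod Y) (X.prod Z))))
      = (qid X).pr (mk (Mor.coev X Z)) ⊚ (qid X).pr ((qid X).ex (mk (Mor.inr (X.prod Y) (X.prod Z))))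
    from by rw [pr_comp_pr, id_comp]]
  rw [comp_assoc, ← eps1, ← comp_assoc, triangle2, id_comp]

open Q in
theorem orE_top {X Y W : Obj} (u : Q (X.prod .unit) W) (v : Q (Y.prod .unit) W) :
    mk (.dInv (X.coprod Y)) ⊚ (mk (.braid (X.coprod Y) .unit) ⊚ (mk (xiM .unit X Y) ⊚
      ((mk (.braid .unit X)).co (mk (.braid .unit Y)) ⊚ ((u.co v) ⊚ mk (.codiag W)))))
    = ((mk (.dInv X) ⊚ u).co (mk (.dInv Y) ⊚ v)) ⊚ mk (.codiag W) := by
  apply copr_ext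
  · conv_rhs => rw [← comp_assoc, inl_nat, comp_assoc, m_inl, comp_id]
    conv_lhs => rw [← comp_assoc, dInv_nat, comp_assoc,
      ← comp_assoc ((mk (Mor.inl X Y)).pr (qid Obj.unit)), ← c_nat, comp_assoc,
      ← comp_assoc ((qid Obj.unit).pr (mk (Mor.inl X Y))), xi_inl,
      ← comp_assoc (mk (Mor.inl (Obj.unit.prod X) (Obj.unit.prod Y))), inl_nat, comp_assoc,
      ← comp_assoc (mk (Mor.inl (X.prod Obj.unit) (Y.prod Obj.unit))), inl_nat,
      comp_assoc, m_inl, comp_id,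
      ← comp_assoc (mk (Mor.braid X Obj.unit)), c_c, id_comp]
  · conv_rhs => rw [← comp_assoc, inr_nat, comp_assoc, m_inr, comp_id]
    conv_lhs => rw [← comp_assoc, dInv_nat, comp_assoc,
      ← comp_assoc ((mk (Mor.inr X Y)).pr (qid Obj.unit)), ← c_nat, comp_assoc,
      ← comp_assoc ((qid Obj.unit).pr (mk (Mor.inr X Y))), xi_inr,
      ← comp_assoc (mk (Mor.inr (Obj.unit.prod X) (Obj.unit.prod Y))), inr_nat, comp_assoc,
      ← comp_assoc (mk (Mor.inr (X.prod Obj.unit) (Y.prod Obj.unit))), inr_nat,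
      comp_assoc, m_inr, comp_id,
      ← comp_assoc (mk (Mor.braid Y Obj.unit)), c_c, id_comp]

open Q in
theorem co_case {X Y W V : Obj} (F : Q X W) (G : Q Y V) :
    mk (.dInv (X.coprod Y)) ⊚ (mk (.braid (X.coprod Y) .unit) ⊚ (mk (xiM .unit X Y) ⊚
      ((mk (.braid .unit X)).co (mk (.braid .unit Y)) ⊚
        (((mk (.d X) ⊚ (F ⊚ mk (.inl W V))).co (mk (.d Y) ⊚ (G ⊚ mk (.inr W V)))) ⊚
          mk (.codiag (W.coprod V))))))
    = F.co G := by
  rw [orE_top, ← comp_assoc (mk (Mor.dInv X)) (mk (Mor.d X)), dInv_d, id_comp,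
      ← comp_assoc (mk (Mor.dInv Y)) (mk (Mor.d Y)), dInv_d, id_comp,
      show (F ⊚ mk (Mor.inl W V)).co (G ⊚ mk (Mor.inr W V))
          = (F.co G) ⊚ ((mk (Mor.inl W V)).co (mk (Mor.inr W V))) from (co_comp_co _ _ _ _).symm,
      comp_assoc, m_inl_inr, comp_id]

open Q in
theorem codiag_case (A : Obj) :
    mk (.dInv (A.coprod A)) ⊚ (mk (.braid (A.coprod A) .unit) ⊚ (mk (xiM .unit A A) ⊚
      ((mk (.braid .unit A)).co (mk (.braid .unit A)) ⊚
        (((mk (.d A)).co (mk (.d A))) ⊚ mk (.codiag A)))))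
    = mk (.codiag A) := by
  rw [orE_top, dInv_d, co_id, id_comp]

open Q in
theorem ex_case {A B C D : Obj} (F : Q A B) (G : Q C D) :
    mk (.coev A (B.exp C)) ⊚ (qid A).ex (mk (.dInv (A.prod (B.exp C))) ⊚
      ((((F.pr (qid (B.exp C))) ⊚ mk (.ev B C)).pr (qid .unit)) ⊚ (mk (.d C) ⊚ G)))
    = F.ex G := by
  rw [← comp_assoc ((F.pr (qid (B.exp C)) ⊚ mk (Mor.ev B C)).pr (qid Obj.unit)), ← d_nat,
      comp_assoc, ← comp_assoc (mk (Mor.dInv (A.prod (B.exp C)))), dInv_d, id_comp,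
      ← ex_id B C, eps2,
      show (qid A).ex ((qid A).pr (F.ex (qid C)) ⊚ mk (Mor.ev A C) ⊚ G)
          = (qid A).ex ((qid A).pr (F.ex (qid C))) ⊚ ((qid A).ex (mk (Mor.ev A C)) ⊚ (qid A).ex G)
        from by rw [ex_comp_ex, ex_comp_ex, id_comp, id_comp, comp_assoc],
      ← comp_assoc, eta1, comp_assoc, ← comp_assoc (mk (Mor.coev A (A.exp C))), triangle1,
      id_comp, ex_comp_ex, id_comp, id_comp]

theorem key_lemma : ∀ {X Y : Obj} (g : Mor X Y), BEqH (tP (uP g)) g := by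
  intro X Y g
  induction g with
  | id A =>
      show BEqH (.id (tF (uF A))) (.id A)
      rw [tF_uF]; exact ⟨.refl _⟩
  | comp f g ihf ihg =>
      exact BEqH.comp ihf ihg
  | d A =>
      simp only [uP, tP, mapCtx, Ctx.fill, tF, uF]
      rw [tF_uF A]; exact ⟨.id_right _⟩
  | dInv A =>
      simp only [uP, tP, mapCtx, Ctx.fill, tF, uF]
      rw [tF_uF A]; exact ⟨.id_right _⟩
  | assocR A B C =>
      simp only [uP, tP, mapCtx, Ctx.fill, tF, uF]
      rw [tF_uF A, tF_uF B, tF_uF C]; exact ⟨.id_right _⟩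
  | assocL A B C =>
      simp only [uP, tP, mapCtx, Ctx.fill, tF, uF]
      rw [tF_uF A, tF_uF B, tF_uF C]; exact ⟨.id_right _⟩
  | braid A B =>
      simp only [uP, tP, mapCtx, Ctx.fill, tF, uF]
      rw [tF_uF A, tF_uF B]; exact ⟨.id_right _⟩
  | diag A =>
      simp only [uP, tP, mapCtx, Ctx.fill, tF, uF]
      rw [tF_uF A]; exact ⟨.id_right _⟩
  | bang A =>
      simp only [uP, tP, mapCtx, Ctx.fill, tF, uF]
      rw [tF_uF A]; exact ⟨.id_right _⟩
  | codiag A =>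
      simp only [uP, tP, mapCtx, Ctx.fill, tF, uF]
      rw [tF_uF A]
      apply BEqH.ofQ
      simp only [mk_comp, mk_co, mk_id, comp_id]
      exact codiag_case A
  | exf A =>
      simp only [uP, tP, mapCtx, Ctx.fill, tF, uF]
      rw [tF_uF A]; exact ⟨.refl _⟩
  | inl A B =>
      simp only [uP, tP, mapCtx, Ctx.fill, tF, uF]
      rw [tF_uF A, tF_uF B]; exact ⟨.id_left _⟩
  | inr A B =>
      simp only [uP, tP, mapCtx, Ctx.fill, tF, uF]
      rw [tF_uF A, tF_uF B]; exact ⟨.id_left _⟩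
  | ev A B =>
      simp only [uP, tP, mapCtx, Ctx.fill, tF, uF]
      rw [tF_uF A, tF_uF B]
      apply BEqH.ofQ
      simp only [mk_comp, mk_pr, mk_id, pr_id, id_comp, comp_id]
      rw [← d_nat, ← comp_assoc, dInv_d, id_comp]
  | coev A B =>
      simp only [uP, tP, mapCtx, Ctx.fill, tF, uF]
      rw [tF_uF A, tF_uF B]
      apply BEqH.ofQ
      simp only [mk_comp, mk_ex, mk_id, ex_id, comp_id]
  | pr f g ihf ihg => exact BEqH.prH ihf ihg
  | co f g ihf ihg =>
      refine BEqH.congrQ ?_ (BEqH.coH ihf ihg)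
      show Q.mk (tP (uP (Mor.co f g))) = Q.mk ((tP (uP f)).co (tP (uP g)))
      simp only [uP, tP, mapCtx, Ctx.fill, tF, uF, mk_comp, mk_co, mk_id, mk_pr]
      exact co_case (mk (tP (uP f))) (mk (tP (uP g)))
  | ex f g ihf ihg =>
      refine BEqH.congrQ ?_ (BEqH.exH ihf ihg)
      show Q.mk (tP (uP (Mor.ex f g))) = Q.mk ((tP (uP f)).ex (tP (uP g)))
      simp only [uP, tP, mapCtx, Ctx.fill, tF, uF, mk_comp, mk_ex, mk_id, mk_pr]
      exact ex_case (mk (tP (uP f))) (mk (tP (uP g)))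

/-- Lemma 5.14 of the paper.  For every morphism term `g` of the
free bicartesian closed category `ℬ`, `t(t′(g)) = g` holds in `ℬ` (equality in `ℬ`
being the bicartesian closed equality `BEq` of morphism terms). -/
theorem t_tinv (X Y : Obj) (g : Mor X Y) :
    BEq (cast (by rw [tF_uF, tF_uF]) (tP (uP g)) : Mor X Y) g :=
  (key_lemma g).toCast _
end JSys
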